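/- arXiv:2111.06201 — 2 statements merged into one kernel-verified Lean document; each statement's English description precedes it below -/
import Mathlib

section
/- Consider the 3×3 row-stochastic circulant-type matrix p with rows (a, b, 1−a−b), (b, 1−a−b, a), (1−a−b, a, b), where 0 < a, b, a+b < 1, and let N = (T/(3n))·p (the expected frequency matrix for equal cluster ratios α = (1/3,1/3,1/3) with n states per construction). Then the singular values of N are σ₁(N) = T/(3n) and σ₂(N) = σ₃(N) = (T/(3n))·√(1 + 3(a² − a + ab − b + b²)). -/
theorem Matrix.isHermitian_transpose_mul_self {m n : Type*} [Fintype m]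
    (A : Matrix m n ℝ) : (A.transpose * A).IsHermitian :=
  Matrix.isHermitian_conjTranspose_mul_self A

/-- The singular values of a real `s × m` matrix, listed in decreasing order. -/
noncomputable def singularValues {s m : ℕ} (A : Matrix (Fin s) (Fin m) ℝ) : Fin m → ℝ :=
  fun i =>
    Real.sqrt
      ((Matrix.isHermitian_transpose_mul_self A).eigenvalues
        (Tuple.sort (Matrix.isHermitian_transpose_mul_self A).eigenvalues i.rev))

/-- The 3×3 circulant-type row-stochastic matrix with rows
`(a, b, 1-a-b)`, `(b, 1-a-b, a)`, `(1-a-b, a, b)`. -/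
def pmat (a b : ℝ) : Matrix (Fin 3) (Fin 3) ℝ :=
  Matrix.of ![![a, b, 1 - a - b], ![b, 1 - a - b, a], ![1 - a - b, a, b]]

/-! The characteristic polynomial of `(c • p)ᵀ (c • p)` factors as `(X - c²) (X - c² μ)²` with
`μ = 1 + 3 (a² - a + ab - b + b²)`. Since `1 - μ = 3 (a (1 - a - b) + b (1 - b)) ≥ 0`, the
eigenvalues in decreasing order are `c², c² μ, c² μ`, and the singular values are their square
roots. -/

open Matrix Polynomial

theorem Matrix.IsHermitian.ofFn_eigenvalues_sort_rev {n : ℕ} {A : Matrix (Fin n) (Fin n) ℝ}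
    (hA : A.IsHermitian) :
    List.ofFn (fun i : Fin n => hA.eigenvalues (Tuple.sort hA.eigenvalues i.rev)) =
      A.charpoly.roots.sort (· ≥ ·) := by
  have hanti : Antitone (fun i : Fin n => hA.eigenvalues (Tuple.sort hA.eigenvalues i.rev)) :=
    (Tuple.monotone_sort hA.eigenvalues).comp_antitone Fin.rev_anti
  refine List.Perm.eq_of_pairwise' (r := (· ≥ ·)) hanti.sortedGE_ofFn.pairwise
    (Multiset.pairwise_sort _ _) ?_
  rw [← Multiset.coe_eq_coe, Multiset.sort_eq, hA.roots_charpoly_eq_eigenvalues]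
  simp only [RCLike.ofReal_real_eq_id, Function.id_comp, Fin.univ_val_map, Multiset.coe_eq_coe]
  exact Equiv.Perm.ofFn_comp_perm (Fin.revPerm.trans (Tuple.sort hA.eigenvalues)) hA.eigenvalues

theorem ofFn_singularValues {s m : ℕ} (A : Matrix (Fin s) (Fin m) ℝ) :
    List.ofFn (singularValues A) = ((Aᵀ * A).charpoly.roots.sort (· ≥ ·)).map Real.sqrt := by
  rw [← (isHermitian_transpose_mul_self A).ofFn_eigenvalues_sort_rev, List.map_ofFn]
  rfl

theorem sort_roots_X_sub_C_mul_X_sub_C_sq {R : Type*} [CommRing R] [IsDomain R] [LinearOrder R]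
    {x y : R} (hyx : y ≤ x) :
    ((X - C x) * (X - C y) ^ 2).roots.sort (· ≥ ·) = [x, y, y] := by
  have hroots : ((X - C x) * (X - C y) ^ 2).roots = x ::ₘ y ::ₘ {y} := by
    rw [roots_mul (by simp [X_sub_C_ne_zero]), roots_pow, roots_X_sub_C, roots_X_sub_C]
    rfl
  rw [hroots, Multiset.sort_cons _ _ _ (by simpa using hyx), Multiset.sort_cons _ _ _ (by simp),
    Multiset.sort_singleton]

theorem charpoly_transpose_mul_self_smul_pmat (a b c : ℝ) :
    ((c • pmat a b)ᵀ * (c • pmat a b)).charpoly =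
      (X - C (c ^ 2)) * (X - C (c ^ 2 * (1 + 3 * (a ^ 2 - a + a * b - b + b ^ 2)))) ^ 2 := by
  refine Polynomial.funext fun t => ?_
  rw [eval_charpoly]
  simp only [scalar_apply, pmat, smul_of, smul_cons, smul_eq_mul, smul_empty, det_fin_three,
    Matrix.sub_apply, diagonal_apply_eq, mul_apply, transpose_apply, of_apply, cons_val',
    cons_val_zero, cons_val_fin_one, Fin.sum_univ_three, cons_val_one, cons_val, ne_eq,
    Fin.reduceEq, not_false_eq_true, diagonal_apply_ne, eval_mul, eval_sub, eval_X, eval_pow,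
    eval_C]
  ring

theorem stmt_14_general (a b : ℝ) (ha : 0 < a) (hb : 0 < b) (hab : a + b < 1)
    (T : ℝ) (hT : 0 < T) (n : ℕ) :
    singularValues ((T / (3 * n)) • pmat a b) 0 = T / (3 * n) ∧
    singularValues ((T / (3 * n)) • pmat a b) 1 =
      T / (3 * n) * Real.sqrt (1 + 3 * (a ^ 2 - a + a * b - b + b ^ 2)) ∧
    singularValues ((T / (3 * n)) • pmat a b) 2 =
      T / (3 * n) * Real.sqrt (1 + 3 * (a ^ 2 - a + a * b - b + b ^ 2)) := by
  set c := T / (3 * n)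
  set μ := 1 + 3 * (a ^ 2 - a + a * b - b + b ^ 2)
  have hc : 0 ≤ c := div_nonneg hT.le (by positivity)
  have hμ : μ ≤ 1 := by
    have hgap : 1 - μ = 3 * (a * (1 - a - b) + b * (1 - b)) := by ring
    linarith [mul_pos ha (by linarith : 0 < 1 - a - b), mul_pos hb (by linarith : 0 < 1 - b)]
  have hsv := ofFn_singularValues (c • pmat a b)
  rw [charpoly_transpose_mul_self_smul_pmat,
    sort_roots_X_sub_C_mul_X_sub_C_sq (mul_le_of_le_one_right (sq_nonneg c) hμ)] at hsv
  simp only [List.ofFn_succ, List.ofFn_zero, List.map_cons, List.map_nil, List.cons.injEq,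
    Fin.succ_zero_eq_one, Fin.succ_one_eq_two, and_true] at hsv
  obtain ⟨h0, h1, h2⟩ := hsv
  rw [h0, h1, h2, Real.sqrt_mul (sq_nonneg c), Real.sqrt_sq hc]
  exact ⟨rfl, rfl, rfl⟩

theorem stmt_14 (a b : ℝ) (ha : 0 < a) (hb : 0 < b) (hab : a + b < 1)
    (T : ℝ) (hT : 0 < T) (n : ℕ) (hn : 0 < n) :
    singularValues ((T / (3 * n)) • pmat a b) 0 = T / (3 * n) ∧
    singularValues ((T / (3 * n)) • pmat a b) 1 =
      T / (3 * n) * Real.sqrt (1 + 3 * (a ^ 2 - a + a * b - b + b ^ 2)) ∧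
    singularValues ((T / (3 * n)) • pmat a b) 2 =
      T / (3 * n) * Real.sqrt (1 + 3 * (a ^ 2 - a + a * b - b + b ^ 2)) :=
  stmt_14_general a b ha hb hab T hT n
end

section
/- Let 0 < a, b with a + b < 1, a ≠ 1/3, b ≠ 1/3, and let p be the 3×3 matrix with rows (a, b, 1−a−b), (b, 1−a−b, a), (1−a−b, a, b). Then p is invertible (has rank 3). -/
theorem stmt_15 (a b : ℝ) (ha : 0 < a) (hb : 0 < b) (hab : a + b < 1)
    (ha3 : a ≠ 1 / 3) (hb3 : b ≠ 1 / 3) :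
    (pmat a b).det ≠ 0 ∧ (pmat a b).rank = 3 := by
  have hdet : (pmat a b).det ≠ 0 := by
    simp only [pmat, Matrix.det_fin_three, Matrix.of_apply]
    simp [Matrix.cons_val_zero, Matrix.cons_val_one]
    intro h
    apply ha3
    nlinarith [sq_nonneg (a - b), sq_nonneg (a + 2*b - 1), sq_nonneg (2*a + b - 1)]
  refine ⟨hdet, ?_⟩
  have : IsUnit (pmat a b) := (Matrix.isUnit_iff_isUnit_det _).2 hdet.isUnit
  simpa using Matrix.rank_of_isUnit _ this
end
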